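/- arXiv:2604.05370 — 3 statements merged into one kernel-verified Lean document; each statement's English description precedes it below -/
import Mathlib

section
/- (Smul'jan-type lemma, matrix version) For complex matrices X (n×n), Y (n×m), Z (m×m), the block matrix [[X, Y],[Y*, Z]] is positive semidefinite if and only if X and Z are positive semidefinite and there exists a matrix U with Z U = Y* and X − U* Z U positive semidefinite. -/
/-!
If `M = [[X, Y], [Yᴴ, Z]]` is positive semidefinite, then `M (0, y) = 0` whenever `Z y = 0`,
so `ker Z ⊆ ker Y` and hence the columns of `Yᴴ` lie in `(ker Z)ᗮ = range Z`: this produces `U`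
with `Z U = Yᴴ`. Given such a `U`, completing the square gives
`⟪M (x, y), (x, y)⟫ = ⟪Z (U x + y), U x + y⟫ + ⟪(X - Uᴴ Z U) x, x⟫`, and both directions follow,
choosing `y = -U x` for the forward one.
-/

open scoped ComplexOrder Matrix

namespace Matrix

variable {m n : Type*} [Fintype m] [Fintype n]

theorem schur_complement_eq₂₂_of_mul_eq {α : Type*} [CommRing α] [StarRing α]
    {X : Matrix n n α} {Y : Matrix n m α} {Z : Matrix m m α} {U : Matrix m n α}
    (hZ : Z.IsHermitian) (hU : Z * U = Yᴴ) (x : n → α) (y : m → α) :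
    (star (x ⊕ᵥ y)) ᵥ* (fromBlocks X Y Yᴴ Z) ⬝ᵥ (x ⊕ᵥ y) =
      (star (U *ᵥ x + y)) ᵥ* Z ⬝ᵥ (U *ᵥ x + y) + (star x) ᵥ* (X - Uᴴ * Z * U) ⬝ᵥ x := by
  obtain rfl : Y = Uᴴ * Z := by
    rw [← conjTranspose_conjTranspose Y, ← hU, conjTranspose_mul, hZ.eq]
  simp only [Function.star_sumElim, conjTranspose_mul, hZ.eq, conjTranspose_conjTranspose,
    vecMul_fromBlocks, Sum.elim_comp_inl, Sum.elim_comp_inr, sumElim_dotProduct_sumElim,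
    add_dotProduct, star_add, star_mulVec, add_vecMul, vecMul_vecMul, dotProduct_add,
    dotProduct_mulVec, Matrix.mul_assoc, vecMul_sub, sub_dotProduct]
  abel

theorem PosSemidef.fromBlocks_iff_of_mul_eq {R : Type*} [CommRing R] [PartialOrder R]
    [StarRing R] [StarOrderedRing R] {X : Matrix n n R} {Y : Matrix n m R} {Z : Matrix m m R}
    {U : Matrix m n R} (hZ : Z.PosSemidef) (hU : Z * U = Yᴴ) :
    (fromBlocks X Y Yᴴ Z).PosSemidef ↔ (X - Uᴴ * Z * U).PosSemidef := by
  have hUZU : (Uᴴ * Z * U).IsHermitian := isHermitian_conjTranspose_mul_mul U hZ.isHermitian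
  constructor
  · intro h
    refine .of_dotProduct_mulVec_nonneg ((isHermitian_fromBlocks_iff.mp h.isHermitian).1.sub hUZU)
      fun x => ?_
    have := h.dotProduct_mulVec_nonneg (x ⊕ᵥ -(U *ᵥ x))
    rwa [dotProduct_mulVec, schur_complement_eq₂₂_of_mul_eq hZ.isHermitian hU, add_neg_cancel,
      star_zero, zero_vecMul, zero_dotProduct, zero_add, ← dotProduct_mulVec] at this
  · intro h
    have hX : X.IsHermitian := by simpa using h.isHermitian.add hUZU
    refine .of_dotProduct_mulVec_nonneg (isHermitian_fromBlocks_iff.mpr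
      ⟨hX, rfl, conjTranspose_conjTranspose Y, hZ.isHermitian⟩) fun v => ?_
    rw [dotProduct_mulVec, ← Sum.elim_comp_inl_inr v,
      schur_complement_eq₂₂_of_mul_eq hZ.isHermitian hU, ← dotProduct_mulVec,
      ← dotProduct_mulVec]
    exact add_nonneg (hZ.dotProduct_mulVec_nonneg _) (h.dotProduct_mulVec_nonneg _)

variable {𝕜 : Type*} [RCLike 𝕜]

theorem IsHermitian.exists_mulVec_eq {Z : Matrix m m 𝕜} (hZ : Z.IsHermitian) {b : m → 𝕜}
    (hb : ∀ y, Z *ᵥ y = 0 → star y ⬝ᵥ b = 0) : ∃ u, Z *ᵥ u = b := by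
  classical
  have hb_mem : WithLp.toLp 2 b ∈ LinearMap.range (toEuclideanLin Z) := by
    rw [← Submodule.orthogonal_orthogonal (LinearMap.range _),
      (isSymmetric_toEuclideanLin_iff.mpr hZ).orthogonal_range]
    intro y hy
    rw [EuclideanSpace.inner_eq_star_dotProduct, dotProduct_comm]
    exact hb _ (congrArg WithLp.ofLp hy)
  obtain ⟨u, hu⟩ := hb_mem
  exact ⟨WithLp.ofLp u, congrArg WithLp.ofLp hu⟩

omit [Fintype n] in
theorem IsHermitian.exists_mul_eq {Z : Matrix m m 𝕜} (hZ : Z.IsHermitian) {B : Matrix m n 𝕜}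
    (hB : ∀ y, Z *ᵥ y = 0 → star y ᵥ* B = 0) : ∃ U, Z * U = B := by
  choose u hu using fun j => hZ.exists_mulVec_eq (b := fun i => B i j)
    fun y hy => congrFun (hB y hy) j
  exact ⟨of fun i j => u j i, Matrix.ext fun i j => congrFun (hu j) i⟩

theorem PosSemidef.mulVec_eq_zero_of_fromBlocks {X : Matrix n n 𝕜} {Y : Matrix n m 𝕜}
    {Z : Matrix m m 𝕜} (h : (fromBlocks X Y Yᴴ Z).PosSemidef) {y : m → 𝕜} (hy : Z *ᵥ y = 0) :
    Y *ᵥ y = 0 := by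
  have hzero : star (0 ⊕ᵥ y) ⬝ᵥ fromBlocks X Y Yᴴ Z *ᵥ (0 ⊕ᵥ y) = 0 := by
    simp [fromBlocks_mulVec, hy, Function.star_sumElim]
  have := congrArg (· ∘ Sum.inl) ((h.dotProduct_mulVec_zero_iff _).mp hzero)
  simpa [fromBlocks_mulVec] using this

end Matrix

/-- Smul'jan-type lemma: the block matrix [[X, Y],[Y*, Z]] is positive
semidefinite iff X, Z are positive semidefinite and there is U with Z U = Y* and
X − U* Z U positive semidefinite. -/
theorem stmt_7 (n m : ℕ) (X : Matrix (Fin n) (Fin n) ℂ)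
    (Y : Matrix (Fin n) (Fin m) ℂ) (Z : Matrix (Fin m) (Fin m) ℂ) :
    (Matrix.fromBlocks X Y Yᴴ Z).PosSemidef ↔
      X.PosSemidef ∧ Z.PosSemidef ∧
        ∃ U : Matrix (Fin m) (Fin n) ℂ, Z * U = Yᴴ ∧ (X - Uᴴ * Z * U).PosSemidef := by
  refine ⟨fun h => ?_, fun ⟨_, hZ, U, hU, hS⟩ => (hZ.fromBlocks_iff_of_mul_eq hU).mpr hS⟩
  have hZ : Z.PosSemidef := h.submatrix Sum.inr
  obtain ⟨U, hU⟩ := hZ.isHermitian.exists_mul_eq fun y hy => by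
    rw [← Matrix.star_mulVec, h.mulVec_eq_zero_of_fromBlocks hy, star_zero]
  exact ⟨h.submatrix Sum.inl, hZ, U, hU, (hZ.fromBlocks_iff_of_mul_eq hU).mp h⟩
end

section
/- For Hermitian positive semidefinite n×n matrices A and C and an arbitrary n×n matrix B, the block matrix [[A, B*],[B, C]] is positive semidefinite if and only if |⟨Bx, y⟩|² ≤ ⟨Ax, x⟩·⟨Cy, y⟩ for all vectors x, y ∈ ℂⁿ. -/
/-!
Write `a = ⟨Ax, x⟩`, `b = ⟨Bx, y⟩`, `c = ⟨Cy, y⟩`. The quadratic form of the block matrix at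
`(x, s • y)` is `a + 2 Re (s̄ b) + |s|² c`, so the block matrix is positive semidefinite iff this is
nonnegative for all `x`, `y`, `s`. For fixed `a, c ≥ 0` that is equivalent to `|b|² ≤ a c`: on the
real line `s = t b / |b|` it is the real quadratic `a + 2 t |b| + t² c`, whose discriminant must be
nonpositive; conversely `a + |s|² c ≥ 2 |s| √(a c) ≥ 2 |s| |b|` by AM-GM.
-/

open scoped ComplexOrder Matrix ComplexConjugate

lemma sq_le_mul_of_forall_nonneg_quadratic {a b c : ℝ}
    (h : ∀ t : ℝ, 0 ≤ a + 2 * b * t + c * t ^ 2) : b ^ 2 ≤ a * c := by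
  have := discrim_le_zero fun t => (h t).trans_eq (by ring : _ = c * (t * t) + 2 * b * t + a)
  rw [discrim] at this
  linarith

namespace RCLike

variable {𝕜 : Type*} [RCLike 𝕜]

lemma forall_nonneg_quadratic_iff_norm_sq_le_mul {a c : ℝ} (ha : 0 ≤ a) (hc : 0 ≤ c) (b : 𝕜) :
    (∀ s : 𝕜, 0 ≤ a + 2 * re (conj s * b) + ‖s‖ ^ 2 * c) ↔ ‖b‖ ^ 2 ≤ a * c := by
  constructor
  · intro h
    obtain rfl | hb := eq_or_ne b 0
    · simpa using sq_le_mul_of_forall_nonneg_quadratic (b := 0) fun t => by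
        simpa [norm_ofReal, sq_abs, mul_comm] using h t
    · refine sq_le_mul_of_forall_nonneg_quadratic fun t => ?_
      have hmid : conj ((t : 𝕜) * b / ‖b‖) * b = ((t * ‖b‖ : ℝ) : 𝕜) := by
        rw [map_div₀, map_mul, conj_ofReal, conj_ofReal, div_mul_eq_mul_div, mul_assoc, conj_mul]
        push_cast
        field_simp
      have hnorm : ‖(t : 𝕜) * b / ‖b‖‖ = |t| := by
        rw [norm_div, norm_mul, norm_ofReal, norm_ofReal, abs_norm,
          mul_div_cancel_right₀ _ (norm_ne_zero_iff.2 hb)]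
      have := h ((t : 𝕜) * b / ‖b‖)
      rw [hmid, hnorm, ofReal_re, sq_abs] at this
      linarith
  · intro h s
    have hsb : (‖s‖ * ‖b‖) ^ 2 ≤ a * (‖s‖ ^ 2 * c) := by
      rw [mul_pow]; nlinarith [sq_nonneg ‖s‖]
    have hre : -(‖s‖ * ‖b‖) ≤ re (conj s * b) := by
      simpa [norm_mul, norm_conj] using neg_le_of_abs_le (abs_re_le_norm (conj s * b))
    linarith [two_mul_le_add_of_sq_le_mul ha (by positivity) hsb]

end RCLike

namespace Matrix

open RCLike

variable {𝕜 m n : Type*} [RCLike 𝕜] [Fintype m] [Fintype n]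

lemma IsHermitian.posSemidef_iff_re_dotProduct_mulVec_nonneg {M : Matrix n n 𝕜}
    (hM : M.IsHermitian) : M.PosSemidef ↔ ∀ x, 0 ≤ re (star x ⬝ᵥ (M *ᵥ x)) :=
  ⟨fun h => h.re_dotProduct_nonneg, fun h => .of_dotProduct_mulVec_nonneg hM fun x =>
    RCLike.nonneg_iff.2 ⟨h x, hM.im_star_dotProduct_mulVec_self x⟩⟩

lemma star_sumElim_dotProduct_fromBlocks_mulVec (A : Matrix m m 𝕜) (B : Matrix n m 𝕜)
    (C : Matrix n n 𝕜) (x : m → 𝕜) (y : n → 𝕜) :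
    star (Sum.elim x y) ⬝ᵥ (fromBlocks A Bᴴ B C *ᵥ Sum.elim x y) =
      star x ⬝ᵥ (A *ᵥ x) + (star y ⬝ᵥ (B *ᵥ x) + conj (star y ⬝ᵥ (B *ᵥ x)))
        + star y ⬝ᵥ (C *ᵥ y) := by
  have hstar : star (Sum.elim x y) = Sum.elim (star x) (star y) := by
    ext (i | i) <;> rfl
  have hcross : star x ⬝ᵥ (Bᴴ *ᵥ y) = conj (star y ⬝ᵥ (B *ᵥ x)) := by
    rw [← star_def, star_dotProduct, star_mulVec, conjTranspose_conjTranspose, dotProduct_mulVec]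
  rw [fromBlocks_mulVec, hstar, sumElim_dotProduct_sumElim, Sum.elim_comp_inl, Sum.elim_comp_inr,
    dotProduct_add, dotProduct_add, hcross]
  ring

lemma re_star_sumElim_smul_dotProduct_fromBlocks_mulVec (A : Matrix m m 𝕜) (B : Matrix n m 𝕜)
    (C : Matrix n n 𝕜) (x : m → 𝕜) (y : n → 𝕜) (s : 𝕜) :
    re (star (Sum.elim x (s • y)) ⬝ᵥ (fromBlocks A Bᴴ B C *ᵥ Sum.elim x (s • y))) =
      re (star x ⬝ᵥ (A *ᵥ x)) + 2 * re (conj s * (star y ⬝ᵥ (B *ᵥ x)))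
        + ‖s‖ ^ 2 * re (star y ⬝ᵥ (C *ᵥ y)) := by
  rw [star_sumElim_dotProduct_fromBlocks_mulVec, add_conj, star_smul, mulVec_smul,
    smul_dotProduct, dotProduct_smul, smul_dotProduct]
  simp only [smul_eq_mul, star_def]
  rw [← mul_assoc, mul_conj, ← ofReal_pow, map_add, map_add,
    re_ofReal_mul, ← ofReal_ofNat, ← ofReal_mul, ofReal_re]

lemma posSemidef_fromBlocks_iff_forall_re_nonneg {A : Matrix m m 𝕜} (B : Matrix n m 𝕜)
    {C : Matrix n n 𝕜} (hA : A.IsHermitian) (hC : C.IsHermitian) :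
    (fromBlocks A Bᴴ B C).PosSemidef ↔ ∀ x y (s : 𝕜),
      0 ≤ re (star x ⬝ᵥ (A *ᵥ x)) + 2 * re (conj s * (star y ⬝ᵥ (B *ᵥ x)))
        + ‖s‖ ^ 2 * re (star y ⬝ᵥ (C *ᵥ y)) := by
  rw [(hA.fromBlocks (conjTranspose_conjTranspose B) hC).posSemidef_iff_re_dotProduct_mulVec_nonneg]
  refine ⟨fun h x y s => ?_, fun h z => ?_⟩
  · rw [← re_star_sumElim_smul_dotProduct_fromBlocks_mulVec]
    exact h _
  · have := h (z ∘ Sum.inl) (z ∘ Sum.inr) 1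
    rwa [← re_star_sumElim_smul_dotProduct_fromBlocks_mulVec, one_smul, Sum.elim_comp_inl_inr]
      at this

end Matrix

/-- For PSD Hermitian A, C and arbitrary B, the block matrix
[[A, B*],[B, C]] is PSD iff |⟨Bx, y⟩|² ≤ ⟨Ax, x⟩·⟨Cy, y⟩ for all x, y. -/
theorem stmt_8 (n : ℕ) (A B C : Matrix (Fin n) (Fin n) ℂ)
    (hA : A.PosSemidef) (hC : C.PosSemidef) :
    (Matrix.fromBlocks A Bᴴ B C).PosSemidef ↔
      ∀ x y : Fin n → ℂ,
        ‖star y ⬝ᵥ (B *ᵥ x)‖ ^ 2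
          ≤ (star x ⬝ᵥ (A *ᵥ x)).re * (star y ⬝ᵥ (C *ᵥ y)).re := by
  rw [Matrix.posSemidef_fromBlocks_iff_forall_re_nonneg B hA.1 hC.1]
  exact forall₂_congr fun x y => RCLike.forall_nonneg_quadratic_iff_norm_sq_le_mul
    (hA.re_dotProduct_nonneg x) (hC.re_dotProduct_nonneg y) _
end

section
/- (Propagation step for 2-hyponormal matrix-valued shifts) Let (Aₙ) be positive definite n×n matrices and suppose that for every x, y the inequality |⟨(Aₙ Aₙ₊₁² − Aₙ₋₁² Aₙ)y, x⟩|² ≤ ⟨(Aₙ² − Aₙ₋₁²)x, x⟩·⟨(Aₙ₊₁Aₙ₊₂²Aₙ₊₁ − AₙAₙ₋₁²Aₙ)y, y⟩ holds. If x is a vector with Aₙx = Aₙ₋₁x = x, then Aₙ₊₁² x = x, and hence (since Aₙ₊₁ is positive definite) Aₙ₊₁ x = x. -/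
open scoped ComplexOrder Matrix

/-! Since `Aₙ x = Aₙ₋₁ x = x`, the quadratic form of `Aₙ² − Aₙ₋₁²` vanishes at `x`, so the
inequality forces `⟨M y, x⟩ = 0` for all `y`, where `M = Aₙ Aₙ₊₁² − Aₙ₋₁² Aₙ`; that is,
`Mᴴ x = Aₙ₊₁² x − x = 0`. A positive definite `B` with `B² x = x` fixes `x`, because
`(B + 1)(B x − x) = B² x − x = 0` and `B + 1` is invertible. -/

namespace Matrix

variable {m n 𝕜 : Type*} [Fintype m] [Fintype n] [RCLike 𝕜]

theorem conjTranspose_mulVec_eq_zero_of_forall_dotProduct_mulVec_eq_zero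
    {M : Matrix m n 𝕜} {x : m → 𝕜} (h : ∀ y, star x ⬝ᵥ (M *ᵥ y) = 0) : Mᴴ *ᵥ x = 0 := by
  have hstar : star (Mᴴ *ᵥ x) = star x ᵥ* M := by
    rw [star_mulVec, conjTranspose_conjTranspose]
  rw [← dotProduct_star_self_eq_zero, hstar, ← dotProduct_mulVec]
  exact h _

theorem PosDef.mulVec_eq_self_of_mul_self_mulVec_eq_self [DecidableEq n] {B : Matrix n n 𝕜} (hB : B.PosDef)
    {x : n → 𝕜} (h : (B * B) *ᵥ x = x) : B *ᵥ x = x := by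
  have hker : (B + 1) *ᵥ (B *ᵥ x - x) = 0 := by
    rw [add_mulVec, one_mulVec, mulVec_sub, mulVec_mulVec, h]
    abel
  by_contra hne
  have hpos := (hB.add_posSemidef PosSemidef.one).dotProduct_mulVec_pos (sub_ne_zero.2 hne)
  rw [hker, dotProduct_zero] at hpos
  exact hpos.false

end Matrix

open Matrix in
theorem stmt_15_general (d n : ℕ) (A : ℕ → Matrix (Fin d) (Fin d) ℂ)
    (hA : ∀ k, (A k).PosDef)
    (hineq : ∀ x y : Fin d → ℂ,
      ‖star x ⬝ᵥ ((A n * (A (n+1) * A (n+1)) - (A (n-1) * A (n-1)) * A n) *ᵥ y)‖ ^ 2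
        ≤ (star x ⬝ᵥ ((A n * A n - A (n-1) * A (n-1)) *ᵥ x)).re
          * (star y ⬝ᵥ ((A (n+1) * (A (n+2) * A (n+2)) * A (n+1)
              - A n * (A (n-1) * A (n-1)) * A n) *ᵥ y)).re)
    (x : Fin d → ℂ) (hx1 : A n *ᵥ x = x) (hx2 : A (n-1) *ᵥ x = x) :
    (A (n+1) * A (n+1)) *ᵥ x = x ∧ A (n+1) *ᵥ x = x := by
  set M := A n * (A (n+1) * A (n+1)) - (A (n-1) * A (n-1)) * A n
  have hform : (A n * A n - A (n-1) * A (n-1)) *ᵥ x = 0 := by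
    rw [sub_mulVec, ← mulVec_mulVec, ← mulVec_mulVec, hx1, hx1, hx2, hx2, sub_self]
  have hM : ∀ y, star x ⬝ᵥ (M *ᵥ y) = 0 := fun y => by
    have h := hineq x y
    rw [hform, dotProduct_zero, Complex.zero_re, zero_mul] at h
    exact norm_eq_zero.1 (pow_eq_zero_iff two_ne_zero |>.1 (le_antisymm h (by positivity)))
  have hMH : Mᴴ = (A (n+1) * A (n+1)) * A n - A n * (A (n-1) * A (n-1)) := by
    simp [M, conjTranspose_sub, conjTranspose_mul, (hA n).1.eq, (hA (n+1)).1.eq,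
      (hA (n-1)).1.eq, Matrix.mul_assoc]
  have hsq : (A (n+1) * A (n+1)) *ᵥ x = x := by
    have h := conjTranspose_mulVec_eq_zero_of_forall_dotProduct_mulVec_eq_zero hM
    rw [hMH, sub_mulVec] at h
    simp only [← mulVec_mulVec, hx1, hx2, sub_eq_zero] at h
    rwa [← mulVec_mulVec]
  exact ⟨hsq, (hA (n+1)).mulVec_eq_self_of_mul_self_mulVec_eq_self hsq⟩

/-- Propagation step for 2-hyponormal matrix-valued shifts: if the
2-hyponormality inequality
|⟨(Aₙ Aₙ₊₁² − Aₙ₋₁² Aₙ)y, x⟩|² ≤ ⟨(Aₙ² − Aₙ₋₁²)x, x⟩·⟨(Aₙ₊₁Aₙ₊₂²Aₙ₊₁ − AₙAₙ₋₁²Aₙ)y, y⟩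
holds for all x, y, and Aₙx = Aₙ₋₁x = x, then Aₙ₊₁²x = x and hence Aₙ₊₁x = x. -/
theorem stmt_15 (d n : ℕ) (hn : 1 ≤ n) (A : ℕ → Matrix (Fin d) (Fin d) ℂ)
    (hA : ∀ k, (A k).PosDef)
    (hineq : ∀ x y : Fin d → ℂ,
      ‖star x ⬝ᵥ ((A n * (A (n+1) * A (n+1)) - (A (n-1) * A (n-1)) * A n) *ᵥ y)‖ ^ 2
        ≤ (star x ⬝ᵥ ((A n * A n - A (n-1) * A (n-1)) *ᵥ x)).re
          * (star y ⬝ᵥ ((A (n+1) * (A (n+2) * A (n+2)) * A (n+1)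
              - A n * (A (n-1) * A (n-1)) * A n) *ᵥ y)).re)
    (x : Fin d → ℂ) (hx1 : A n *ᵥ x = x) (hx2 : A (n-1) *ᵥ x = x) :
    (A (n+1) * A (n+1)) *ᵥ x = x ∧ A (n+1) *ᵥ x = x :=
  stmt_15_general d n A hA hineq x hx1 hx2
end
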